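/- Let 0 ≤ K < ∞ and define, for z in the open unit disc 𝔻, A(z) = −( K + 4√(1+K) · (log(e/(1−z)))^{−1} ) / (4(1−z)²) and f(z) = (1−z)^{−(√(1+K)−1)/2} · log(e/(1−z)) (principal branches; note 1−z lies in the right half-plane for z ∈ 𝔻). Then f is a solution of f'' + A f = 0 on 𝔻, the coefficient satisfies |A(z)|(1−|z|²)² ≤ K + 4√(1+K)/log(e/(1−|z|)) for all z ∈ 𝔻, and yet sup_{z∈𝔻} |f(z)|(1−|z|²)^{p} = ∞ for p = (√(1+K)−1)/2. -/

import Mathlib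

open Complex Metric Filter Topology

/-!
Write `w = 1 - z`, `ℓ = log (e / w)` and `p = (√(1+K) - 1)/2`. Since `ℓ' = 1/w`, the function
`f = w^(-p) ℓ` satisfies `f'' = (p(p+1) + (2p+1)/ℓ) f / w²`, and `4p(p+1) = K`, `2p + 1 = √(1+K)`.
For the coefficient bound, `|ℓ| ≥ Re ℓ = 1 - log |w|` with `1 - |z| ≤ |w| ≤ 2`, so everything
reduces to comparing `t²(1 - log t)` at `t = 1 - |z|` and `t = |w|`. On the radius `[0, 1)`
one computes `|f(x)|(1 - x²)^p = (1 + x)^p (1 - log (1 - x))`, which is unbounded.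
-/

lemma hasDerivAt_sq_mul_one_sub_log {t : ℝ} (ht : t ≠ 0) :
    HasDerivAt (fun t : ℝ => t ^ 2 * (1 - Real.log t)) (t * (1 - 2 * Real.log t)) t := by
  refine ((hasDerivAt_pow 2 t).fun_mul ((Real.hasDerivAt_log ht).const_sub 1)).congr_deriv ?_
  field_simp
  ring

lemma monotoneOn_sq_mul_one_sub_log :
    MonotoneOn (fun t : ℝ => t ^ 2 * (1 - Real.log t)) (Set.Ioc 0 (Real.exp (1 / 2))) := by
  refine monotoneOn_of_deriv_nonneg (convex_Ioc _ _)
    (fun t ht => (hasDerivAt_sq_mul_one_sub_log ht.1.ne').continuousAt.continuousWithinAt)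
    (fun t ht => ?_) (fun t ht => ?_) <;> rw [interior_Ioc] at ht
  · exact (hasDerivAt_sq_mul_one_sub_log ht.1.ne').differentiableAt.differentiableWithinAt
  · have hlog : Real.log t ≤ 1 / 2 := (Real.log_le_iff_le_exp ht.1).2 ht.2.le
    rw [(hasDerivAt_sq_mul_one_sub_log ht.1.ne').deriv]
    exact mul_nonneg ht.1.le (by linarith)

lemma antitoneOn_sq_mul_one_sub_log :
    AntitoneOn (fun t : ℝ => t ^ 2 * (1 - Real.log t)) (Set.Ici (Real.exp (1 / 2))) := by
  have hpos : ∀ t, Real.exp (1 / 2) ≤ t → 0 < t := fun t ht => (Real.exp_pos _).trans_le ht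
  refine antitoneOn_of_deriv_nonpos (convex_Ici _)
    (fun t ht => (hasDerivAt_sq_mul_one_sub_log (hpos t ht).ne').continuousAt.continuousWithinAt)
    (fun t ht => ?_) (fun t ht => ?_) <;> rw [interior_Ici] at ht
  · exact (hasDerivAt_sq_mul_one_sub_log (hpos t ht.le).ne').differentiableAt.differentiableWithinAt
  · have ht0 := hpos t ht.le
    have hlog : 1 / 2 ≤ Real.log t := (Real.le_log_iff_exp_le ht0).2 ht.le
    rw [(hasDerivAt_sq_mul_one_sub_log ht0.ne').deriv]
    exact mul_nonpos_of_nonneg_of_nonpos ht0.le (by linarith)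

/-- Past the maximum of `t ↦ t²(1 - log t)` at `√e`, compare through its values `1` at `1` and
`4(1 - log 2) > 1` at `2`. -/
lemma sq_mul_one_sub_log_le {y x : ℝ} (hy : 0 < y) (hy1 : y ≤ 1) (hyx : y ≤ x) (hx : x ≤ 2) :
    y ^ 2 * (1 - Real.log y) ≤ x ^ 2 * (1 - Real.log x) := by
  have he : 1 ≤ Real.exp (1 / 2) := Real.one_le_exp (by norm_num)
  rcases le_or_gt x (Real.exp (1 / 2)) with hxe | hxe
  · exact monotoneOn_sq_mul_one_sub_log ⟨hy, hyx.trans hxe⟩ ⟨hy.trans_le hyx, hxe⟩ hyx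
  · have hy1' : y ^ 2 * (1 - Real.log y) ≤ 1 := by
      simpa using monotoneOn_sq_mul_one_sub_log ⟨hy, hy1.trans he⟩ ⟨one_pos, he⟩ hy1
    have h2x : (2 : ℝ) ^ 2 * (1 - Real.log 2) ≤ x ^ 2 * (1 - Real.log x) :=
      antitoneOn_sq_mul_one_sub_log hxe.le (hxe.le.trans hx) hx
    nlinarith [Real.log_two_lt_d9]

lemma one_sub_sq_sq_mul_one_sub_log_le {r b : ℝ} (hr0 : 0 ≤ r) (hr1 : r < 1) (hb : 1 - r ≤ b)
    (hb2 : b ≤ 2) :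
    (1 - r ^ 2) ^ 2 * (1 - Real.log (1 - r)) ≤ 4 * (b ^ 2 * (1 - Real.log b)) := by
  have hg := sq_mul_one_sub_log_le (by linarith) (by linarith) hb hb2
  have hlog : 0 ≤ 1 - Real.log (1 - r) := by
    linarith [Real.log_nonpos (by linarith : (0:ℝ) ≤ 1 - r) (by linarith)]
  calc (1 - r ^ 2) ^ 2 * (1 - Real.log (1 - r))
      = (1 + r) ^ 2 * ((1 - r) ^ 2 * (1 - Real.log (1 - r))) := by ring
    _ ≤ 4 * (b ^ 2 * (1 - Real.log b)) := by
      gcongr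
      nlinarith

noncomputable def logE (z : ℂ) : ℂ := Complex.log (Real.exp 1 / (1 - z))

noncomputable def powLogE (c z : ℂ) : ℂ := (1 - z) ^ (-c) * logE z

lemma one_sub_mem_slitPlane {z : ℂ} (hz : z.re < 1) : 1 - z ∈ slitPlane :=
  mem_slitPlane_iff.2 (Or.inl (by simpa using hz))

lemma exp_one_div_one_sub_mem_slitPlane {z : ℂ} (hz : z.re < 1) :
    (Real.exp 1 : ℂ) / (1 - z) ∈ slitPlane := by
  have hw : 0 < (1 - z).re := by simpa using hz
  have hn : 0 < normSq (1 - z) := normSq_pos.2 (slitPlane_ne_zero (one_sub_mem_slitPlane hz))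
  refine mem_slitPlane_iff.2 (Or.inl ?_)
  rw [div_re, ofReal_re, ofReal_im, zero_mul, zero_div, add_zero]
  positivity

lemma re_logE {z : ℂ} (hz : z ≠ 1) : (logE z).re = 1 - Real.log ‖1 - z‖ := by
  rw [logE, log_re, norm_div, Complex.norm_of_nonneg (Real.exp_pos 1).le,
    Real.log_div (Real.exp_ne_zero 1) (norm_ne_zero_iff.2 (sub_ne_zero.2 hz.symm)), Real.log_exp]

lemma hasDerivAt_logE {z : ℂ} (hz : z.re < 1) : HasDerivAt logE (1 - z)⁻¹ z := by
  have hw : 1 - z ≠ 0 := slitPlane_ne_zero (one_sub_mem_slitPlane hz)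
  refine (((hasDerivAt_const z _).fun_div ((hasDerivAt_id z).const_sub 1) hw).clog
    (exp_one_div_one_sub_mem_slitPlane hz)).congr_deriv ?_
  simp only [id]
  field_simp
  ring

lemma hasDerivAt_one_sub_cpow (c : ℂ) {z : ℂ} (hz : z.re < 1) :
    HasDerivAt (fun z => (1 - z) ^ (-c)) (c * (1 - z) ^ (-c) / (1 - z)) z := by
  have hw : 1 - z ≠ 0 := slitPlane_ne_zero (one_sub_mem_slitPlane hz)
  refine (((hasDerivAt_id z).const_sub 1).cpow_const (one_sub_mem_slitPlane hz)).congr_deriv ?_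
  simp only [id]
  rw [cpow_sub _ _ hw, cpow_one]
  ring

lemma hasDerivAt_powLogE (c : ℂ) {z : ℂ} (hz : z.re < 1) :
    HasDerivAt (powLogE c) ((1 - z) ^ (-c) * (c * logE z + 1) / (1 - z)) z := by
  refine ((hasDerivAt_one_sub_cpow c hz).fun_mul (hasDerivAt_logE hz)).congr_deriv ?_
  ring

lemma hasDerivAt_deriv_powLogE (c : ℂ) {z : ℂ} (hz : z.re < 1) :
    HasDerivAt (deriv (powLogE c))
      ((1 - z) ^ (-c) * (c * (c + 1) * logE z + (2 * c + 1)) / (1 - z) ^ 2) z := by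
  have hw : 1 - z ≠ 0 := slitPlane_ne_zero (one_sub_mem_slitPlane hz)
  have hderiv :
      deriv (powLogE c) =ᶠ[𝓝 z] fun z => (1 - z) ^ (-c) * (c * logE z + 1) / (1 - z) := by
    filter_upwards [(isOpen_lt continuous_re continuous_const).mem_nhds hz] with x hx
    exact (hasDerivAt_powLogE c hx).deriv
  refine HasDerivAt.congr_of_eventuallyEq ?_ hderiv
  refine (((hasDerivAt_one_sub_cpow c hz).fun_mul
    (((hasDerivAt_logE hz).const_mul c).add_const 1)).fun_div
    ((hasDerivAt_id z).const_sub 1) hw).congr_deriv ?_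
  simp only [id]
  field_simp
  ring

lemma deriv_deriv_powLogE (c : ℂ) {z : ℂ} (hz : z.re < 1) (hℓ : logE z ≠ 0) :
    deriv (deriv (powLogE c)) z =
      (c * (c + 1) + (2 * c + 1) * (logE z)⁻¹) / (1 - z) ^ 2 * powLogE c z := by
  rw [(hasDerivAt_deriv_powLogE c hz).deriv, powLogE]
  field_simp

lemma one_sub_norm_le_norm_one_sub (z : ℂ) : 1 - ‖z‖ ≤ ‖1 - z‖ := by
  simpa using norm_sub_norm_le (1 : ℂ) z

lemma norm_one_sub_le_two {z : ℂ} (hz : ‖z‖ < 1) : ‖1 - z‖ ≤ 2 := by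
  linarith [norm_sub_le (1 : ℂ) z, norm_one (α := ℂ)]

lemma one_sub_log_norm_one_sub_pos {z : ℂ} (hz : ‖z‖ < 1) : 0 < 1 - Real.log ‖1 - z‖ := by
  have hb : 0 < ‖1 - z‖ := by linarith [one_sub_norm_le_norm_one_sub z]
  linarith [Real.log_le_log hb (norm_one_sub_le_two hz), Real.log_two_lt_d9]

lemma logE_ne_zero {z : ℂ} (hz : ‖z‖ < 1) : logE z ≠ 0 := by
  have hz1 : z ≠ 1 := by rintro rfl; simp at hz
  intro h
  have := re_logE hz1
  rw [h, zero_re] at this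
  linarith [one_sub_log_norm_one_sub_pos hz]

lemma norm_coeff_le {K s : ℝ} (hK : 0 ≤ K) (hs : 0 ≤ s) {z : ℂ} (hz : ‖z‖ < 1) :
    ‖((K : ℂ) + 4 * (s : ℂ) * (logE z)⁻¹) / (4 * (1 - z) ^ 2)‖ ≤
      (K + 4 * s / (1 - Real.log ‖1 - z‖)) / (4 * ‖1 - z‖ ^ 2) := by
  have hz1 : z ≠ 1 := by rintro rfl; simp at hz
  have hℓ : 1 - Real.log ‖1 - z‖ ≤ ‖logE z‖ := re_logE hz1 ▸ re_le_norm (logE z)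
  rw [norm_div, norm_mul, norm_pow, RCLike.norm_ofNat]
  gcongr
  refine (norm_add_le _ _).trans ?_
  rw [norm_mul, norm_mul, norm_inv, norm_real, norm_real, Real.norm_of_nonneg hK,
    Real.norm_of_nonneg hs, RCLike.norm_ofNat, ← div_eq_mul_inv]
  gcongr
  exact one_sub_log_norm_one_sub_pos hz

lemma coeff_bound_mul_le {K s r b : ℝ} (hK : 0 ≤ K) (hs : 0 ≤ s) (hr0 : 0 ≤ r) (hr1 : r < 1)
    (hb : 1 - r ≤ b) (hb2 : b ≤ 2) :
    (K + 4 * s / (1 - Real.log b)) / (4 * b ^ 2) * (1 - r ^ 2) ^ 2 ≤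
      K + 4 * s / (1 - Real.log (1 - r)) := by
  have hb0 : 0 < b := by linarith
  have hlogb : 0 < 1 - Real.log b := by
    linarith [Real.log_le_log hb0 hb2, Real.log_two_lt_d9]
  have hlogr : 0 < 1 - Real.log (1 - r) := by
    linarith [Real.log_nonpos (by linarith : (0:ℝ) ≤ 1 - r) (by linarith)]
  have hu : (1 - r ^ 2) ^ 2 ≤ 4 * b ^ 2 := by
    have h : 1 - r ^ 2 ≤ 2 * b := by nlinarith
    calc (1 - r ^ 2) ^ 2 ≤ (2 * b) ^ 2 := pow_le_pow_left₀ (by nlinarith) h 2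
      _ = 4 * b ^ 2 := by ring
  have hkey := one_sub_sq_sq_mul_one_sub_log_le hr0 hr1 hb hb2
  calc (K + 4 * s / (1 - Real.log b)) / (4 * b ^ 2) * (1 - r ^ 2) ^ 2
      = K * ((1 - r ^ 2) ^ 2 / (4 * b ^ 2))
        + 4 * s * ((1 - r ^ 2) ^ 2 / (4 * (b ^ 2 * (1 - Real.log b)))) := by
        field_simp
    _ ≤ K * 1 + 4 * s * (1 / (1 - Real.log (1 - r))) := by
        refine add_le_add (mul_le_mul_of_nonneg_left ?_ hK)
          (mul_le_mul_of_nonneg_left ?_ (by positivity))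
        · exact div_le_one_of_le₀ hu (by positivity)
        · rw [div_le_div_iff₀ (by positivity) hlogr]
          linarith
    _ = K + 4 * s / (1 - Real.log (1 - r)) := by ring

lemma norm_coeff_mul_le {K s : ℝ} (hK : 0 ≤ K) (hs : 0 ≤ s) {z : ℂ} (hz : ‖z‖ < 1) :
    ‖((K : ℂ) + 4 * (s : ℂ) * (logE z)⁻¹) / (4 * (1 - z) ^ 2)‖ * (1 - ‖z‖ ^ 2) ^ 2 ≤
      K + 4 * s / Real.log (Real.exp 1 / (1 - ‖z‖)) := by
  rw [Real.log_div (Real.exp_ne_zero 1) (by linarith), Real.log_exp]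
  calc _ ≤ (K + 4 * s / (1 - Real.log ‖1 - z‖)) / (4 * ‖1 - z‖ ^ 2) * (1 - ‖z‖ ^ 2) ^ 2 := by
        gcongr
        exact norm_coeff_le hK hs hz
    _ ≤ _ := coeff_bound_mul_le hK hs (norm_nonneg z) hz (one_sub_norm_le_norm_one_sub z)
        (norm_one_sub_le_two hz)

lemma norm_powLogE_mul_one_sub_sq_rpow (p : ℝ) {x : ℝ} (hx0 : 0 ≤ x) (hx1 : x < 1) :
    ‖powLogE p x‖ * (1 - x ^ 2) ^ p = (1 + x) ^ p * (1 - Real.log (1 - x)) := by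
  have hw : 0 < 1 - x := by linarith
  have hlog : 0 ≤ 1 - Real.log (1 - x) := by
    linarith [Real.log_nonpos hw.le (by linarith : 1 - x ≤ 1)]
  have hℓ : logE x = ((1 - Real.log (1 - x) : ℝ) : ℂ) := by
    rw [logE, ← ofReal_one, ← ofReal_sub, ← ofReal_div, ← ofReal_log (by positivity),
      Real.log_div (Real.exp_ne_zero 1) hw.ne', Real.log_exp]
  rw [powLogE, hℓ, norm_mul, ← ofReal_one, ← ofReal_sub, norm_cpow_eq_rpow_re_of_pos hw,
    norm_real, Real.norm_of_nonneg hlog, (by ring : 1 - x ^ 2 = (1 - x) * (1 + x)),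
    Real.mul_rpow hw.le (by linarith)]
  simp only [neg_re, ofReal_re]
  rw [Real.rpow_neg hw.le]
  field_simp

lemma exists_lt_norm_powLogE_mul {p : ℝ} (hp : 0 ≤ p) (M : ℝ) :
    ∃ z ∈ ball (0 : ℂ) 1, M < ‖powLogE p z‖ * (1 - ‖z‖ ^ 2) ^ p := by
  set x := 1 - Real.exp (-|M|)
  have hx0 : 0 ≤ x := sub_nonneg.2 (Real.exp_le_one_iff.2 (neg_nonpos.2 (abs_nonneg M)))
  have hx1 : x < 1 := sub_lt_self 1 (Real.exp_pos _)
  refine ⟨x, by rwa [mem_ball_zero_iff, norm_real, Real.norm_of_nonneg hx0], ?_⟩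
  rw [norm_real, Real.norm_of_nonneg hx0, norm_powLogE_mul_one_sub_sq_rpow p hx0 hx1,
    sub_sub_cancel, Real.log_exp]
  calc M < 1 - -|M| := by linarith [le_abs_self M]
    _ ≤ _ := le_mul_of_one_le_left (by linarith [abs_nonneg M])
        (Real.one_le_rpow (by linarith) hp)

lemma re_lt_one_of_mem_ball {z : ℂ} (hz : z ∈ ball (0 : ℂ) 1) : z.re < 1 :=
  (re_le_norm z).trans_lt (mem_ball_zero_iff.1 hz)

/-- For `0 ≤ K < ∞`, let
`A(z) = −(K + 4√(1+K)(log(e/(1−z)))⁻¹)/(4(1−z)²)` and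
`f(z) = (1−z)^{−(√(1+K)−1)/2} · log(e/(1−z))` (principal branches). Then `f` is an
analytic solution of `f'' + A f = 0` on `𝔻`, the coefficient satisfies
`|A(z)|(1−|z|²)² ≤ K + 4√(1+K)/log(e/(1−|z|))` on `𝔻`, and yet
`sup_{z∈𝔻} |f(z)|(1−|z|²)^p = ∞` for `p = (√(1+K)−1)/2`. -/
theorem stmt_16 (K : ℝ) (hK : 0 ≤ K) (A f : ℂ → ℂ)
    (hA : ∀ z ∈ ball (0:ℂ) 1,
      A z = -(((K : ℂ) + 4 * (Real.sqrt (1 + K) : ℂ) *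
        (Complex.log ((Real.exp 1 : ℂ) / (1 - z)))⁻¹)) / (4 * (1 - z) ^ 2))
    (hf : ∀ z ∈ ball (0:ℂ) 1,
      f z = (1 - z) ^ (-((((Real.sqrt (1 + K) - 1) / 2 : ℝ)) : ℂ)) *
        Complex.log ((Real.exp 1 : ℂ) / (1 - z))) :
    AnalyticOnNhd ℂ f (ball (0:ℂ) 1) ∧
    (∀ z ∈ ball (0:ℂ) 1, deriv (deriv f) z + A z * f z = 0) ∧
    (∀ z ∈ ball (0:ℂ) 1,
      ‖A z‖ * (1 - ‖z‖ ^ 2) ^ 2 ≤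
        K + 4 * Real.sqrt (1 + K) / Real.log (Real.exp 1 / (1 - ‖z‖))) ∧
    (∀ M : ℝ, ∃ z ∈ ball (0:ℂ) 1,
      M < ‖f z‖ *
        (1 - ‖z‖ ^ 2) ^ ((Real.sqrt (1 + K) - 1) / 2)) := by
  set s := Real.sqrt (1 + K)
  set p := (s - 1) / 2
  have hs : 1 ≤ s := Real.one_le_sqrt.2 (by linarith)
  have hA' : ∀ z ∈ ball (0:ℂ) 1,
      A z = -((K : ℂ) + 4 * (s : ℂ) * (logE z)⁻¹) / (4 * (1 - z) ^ 2) := hA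
  have hfp : Set.EqOn f (powLogE p) (ball 0 1) := hf
  have hfp_nhds : ∀ z ∈ ball (0:ℂ) 1, f =ᶠ[𝓝 z] powLogE p :=
    fun z hz => hfp.eventuallyEq_of_mem (isOpen_ball.mem_nhds hz)
  refine ⟨?_, fun z hz => ?_, fun z hz => ?_, fun M => ?_⟩
  · refine DifferentiableOn.analyticOnNhd (fun z hz => ?_) isOpen_ball
    exact ((hasDerivAt_powLogE p (re_lt_one_of_mem_ball hz)).differentiableAt.congr_of_eventuallyEq
      (hfp_nhds z hz)).differentiableWithinAt
  · have hK' : K = 4 * p * (p + 1) := by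
      linear_combination -Real.sq_sqrt (by linarith : 0 ≤ 1 + K)
    have hs' : s = 2 * p + 1 := by ring
    rw [(hfp_nhds z hz).deriv.deriv_eq, deriv_deriv_powLogE p (re_lt_one_of_mem_ball hz)
      (logE_ne_zero (mem_ball_zero_iff.1 hz)), hA' z hz, hfp hz, hK', hs']
    push_cast
    generalize 1 - z = w
    ring
  · rw [hA' z hz, neg_div, norm_neg]
    exact norm_coeff_mul_le hK (Real.sqrt_nonneg _) (mem_ball_zero_iff.1 hz)
  · obtain ⟨z, hz, hM⟩ := exists_lt_norm_powLogE_mul (div_nonneg (sub_nonneg.2 hs) zero_le_two) M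
    exact ⟨z, hz, hfp hz ▸ hM⟩
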